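/- arXiv:2501.15338 — 2 statements merged into one kernel-verified Lean document; each statement's English description precedes it below -/
import Mathlib

section
/- For any α ∈ [−1/2, −1/5] and any pair of prices (p₀, p₁) with p₀ − p₁ = 1/4 and p₀, p₁ ∈ [1/2, 9/8], the regret satisfies R₀(p₀*(α),α) − R₀(p₀,α) + R₁(p₁*(α),α) − R₁(p₁,α) = −3α(p₀*(α) − p₀)², which is at least (3/5)(p₀*(α) − p₀)² and at least (3/5)(p₁*(α) − p₁)². -/
/-- Demand `d(p, G, α) = 1/2 + α((G+1)p − 1 − G/2)` for groups `G ∈ {0,1}`. -/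
noncomputable def dem (p : ℝ) (G : ℕ) (α : ℝ) : ℝ :=
  1 / 2 + α * (((G : ℝ) + 1) * p - 1 - (G : ℝ) / 2)

/-- Revenue `R_G(p, α) = p · d(p, G, α)`. -/
noncomputable def Rev (G : ℕ) (p α : ℝ) : ℝ := p * dem p G α

/-- Optimal fair price `p_G*(α) = 7/12 − 1/(6α) − G/4`. -/
noncomputable def pstar (G : ℕ) (α : ℝ) : ℝ := 7 / 12 - 1 / (6 * α) - (G : ℝ) / 4

/-! The total revenue under a fair pair of prices `(p, p - 1/4)` is a quadratic in `p` with
leading coefficient `3α`, and `p₀*(α)` is its vertex. Expanding a quadratic around its vertex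
gives the regret `-3α(p₀*(α) - p₀)²`; since `pᵢ*(α) - pᵢ` is the same for both groups and
`-3α ≥ 3/5`, both lower bounds follow. -/

theorem quadratic_sub_eq_neg_mul_sq_of_vertex {a b c v : ℝ} (hv : 2 * a * v + b = 0) (x : ℝ) :
    (a * v ^ 2 + b * v + c) - (a * x ^ 2 + b * x + c) = -a * (v - x) ^ 2 := by
  linear_combination (v - x) * hv

theorem pstar_one (α : ℝ) : pstar 1 α = pstar 0 α - 1 / 4 := by
  simp only [pstar]
  ring

noncomputable def fairRevenue (α p : ℝ) : ℝ := Rev 0 p α + Rev 1 (p - 1 / 4) α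

theorem fairRevenue_eq (α p : ℝ) :
    fairRevenue α p = 3 * α * p ^ 2 + (1 - 7 * α / 2) * p + (α / 2 - 1 / 8) := by
  simp only [fairRevenue, Rev, dem]
  push_cast
  ring

theorem pstar_zero_vertex {α : ℝ} (hα : α ≠ 0) :
    2 * (3 * α) * pstar 0 α + (1 - 7 * α / 2) = 0 := by
  simp only [pstar]
  field_simp
  ring

theorem fairRevenue_pstar_sub {α : ℝ} (hα : α ≠ 0) (p : ℝ) :
    fairRevenue α (pstar 0 α) - fairRevenue α p = -3 * α * (pstar 0 α - p) ^ 2 := by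
  rw [fairRevenue_eq, fairRevenue_eq, quadratic_sub_eq_neg_mul_sq_of_vertex (pstar_zero_vertex hα)]
  ring

theorem stmt3_general (α : ℝ) (hα : α ∈ Set.Icc (-(1:ℝ)/2) (-(1:ℝ)/5))
    (p₀ p₁ : ℝ) (hfair : p₀ - p₁ = 1 / 4) :
    Rev 0 (pstar 0 α) α - Rev 0 p₀ α + (Rev 1 (pstar 1 α) α - Rev 1 p₁ α)
        = -3 * α * (pstar 0 α - p₀) ^ 2 ∧
    (3/5) * (pstar 0 α - p₀) ^ 2 ≤
      Rev 0 (pstar 0 α) α - Rev 0 p₀ α + (Rev 1 (pstar 1 α) α - Rev 1 p₁ α) ∧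
    (3/5) * (pstar 1 α - p₁) ^ 2 ≤
      Rev 0 (pstar 0 α) α - Rev 0 p₀ α + (Rev 1 (pstar 1 α) α - Rev 1 p₁ α) := by
  have hα_le : α ≤ -1 / 5 := hα.2
  have hα_neg : α < 0 := by linarith
  have hp₁ : p₁ = p₀ - 1 / 4 := by linarith
  have hgap : pstar 1 α - p₁ = pstar 0 α - p₀ := by rw [pstar_one, hp₁]; ring
  have hregret : Rev 0 (pstar 0 α) α - Rev 0 p₀ α + (Rev 1 (pstar 1 α) α - Rev 1 p₁ α)
      = -3 * α * (pstar 0 α - p₀) ^ 2 := by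
    rw [← fairRevenue_pstar_sub hα_neg.ne p₀, fairRevenue, fairRevenue, pstar_one, hp₁]
    ring
  have hbound : 3 / 5 * (pstar 0 α - p₀) ^ 2 ≤ -3 * α * (pstar 0 α - p₀) ^ 2 :=
    mul_le_mul_of_nonneg_right (by linarith) (sq_nonneg _)
  exact ⟨hregret, hregret ▸ hbound, hregret ▸ hgap ▸ hbound⟩

/-- The fair-price regret identity and lower bounds: for `α ∈ [−1/2, −1/5]` and
fair prices `p₀ − p₁ = 1/4` in `[1/2, 9/8]`, the weighted revenue loss equals
`−3α(p₀*(α) − p₀)²` and is at least `(3/5)(p₀*(α) − p₀)²` and `(3/5)(p₁*(α) − p₁)²`. -/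
theorem stmt3 (α : ℝ) (hα : α ∈ Set.Icc (-(1:ℝ)/2) (-(1:ℝ)/5))
    (p₀ p₁ : ℝ) (hfair : p₀ - p₁ = 1 / 4)
    (hp₀ : p₀ ∈ Set.Icc (1/2 : ℝ) (9/8)) (hp₁ : p₁ ∈ Set.Icc (1/2 : ℝ) (9/8)) :
    Rev 0 (pstar 0 α) α - Rev 0 p₀ α + (Rev 1 (pstar 1 α) α - Rev 1 p₁ α)
        = -3 * α * (pstar 0 α - p₀) ^ 2 ∧
    (3/5) * (pstar 0 α - p₀) ^ 2 ≤
      Rev 0 (pstar 0 α) α - Rev 0 p₀ α + (Rev 1 (pstar 1 α) α - Rev 1 p₁ α) ∧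
    (3/5) * (pstar 1 α - p₁) ^ 2 ≤
      Rev 0 (pstar 0 α) α - Rev 0 p₀ α + (Rev 1 (pstar 1 α) α - Rev 1 p₁ α) :=
  stmt3_general α hα p₀ p₁ hfair
end

section
/- Let Q₀, Q₁ be probability distributions on a finite set 𝒴 with Q₀(y), Q₁(y) > 0 for all y ∈ 𝒴. Then for any function J: 𝒴 → {0,1}, Q₀{J = 1} + Q₁{J = 0} ≥ (1/2)·exp(−KL(Q₀ ‖ Q₁)). -/
/-- For probability distributions `Q₀, Q₁` on a finite set with everywhere
positive mass, and any test `J : 𝒴 → {0,1}`,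
`Q₀{J = 1} + Q₁{J = 0} ≥ (1/2)·exp(−KL(Q₀ ‖ Q₁))`, where
`KL(Q₀ ‖ Q₁) = Σ_y Q₀(y) log(Q₀(y)/Q₁(y))`. -/
theorem stmt7 {Y : Type*} [Fintype Y] (Q₀ Q₁ : Y → ℝ)
    (h₀pos : ∀ y, 0 < Q₀ y) (h₁pos : ∀ y, 0 < Q₁ y)
    (h₀sum : ∑ y, Q₀ y = 1) (h₁sum : ∑ y, Q₁ y = 1)
    (J : Y → Fin 2) :
    (1/2) * Real.exp (-(∑ y, Q₀ y * Real.log (Q₀ y / Q₁ y))) ≤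
      (∑ y ∈ Finset.univ.filter (fun y => J y = 1), Q₀ y) +
      (∑ y ∈ Finset.univ.filter (fun y => J y = 0), Q₁ y) := by
  classical
  set m : Y → ℝ := fun y => min (Q₀ y) (Q₁ y) with hm
  set M : Y → ℝ := fun y => max (Q₀ y) (Q₁ y) with hM
  have hmpos : ∀ y, 0 < m y := fun y => lt_min (h₀pos y) (h₁pos y)
  have hMpos : ∀ y, 0 < M y := fun y => lt_of_lt_of_le (h₀pos y) (le_max_left _ _)
  -- Step 1 (Jensen / AM-GM): exp(-KL/2) ≤ ∑ √(Q₀ Q₁)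
  have hJensen : Real.exp (-(∑ y, Q₀ y * Real.log (Q₀ y / Q₁ y)) / 2) ≤
      ∑ y, Real.sqrt (Q₀ y * Q₁ y) := by
    have h := Real.geom_mean_le_arith_mean_weighted Finset.univ Q₀
      (fun y => Real.sqrt (Q₁ y / Q₀ y)) (fun y _ => (h₀pos y).le) h₀sum
      (fun y _ => Real.sqrt_nonneg _)
    have hl : (∏ y, Real.sqrt (Q₁ y / Q₀ y) ^ Q₀ y) =
        Real.exp (-(∑ y, Q₀ y * Real.log (Q₀ y / Q₁ y)) / 2) := by
      have : ∀ y, Real.sqrt (Q₁ y / Q₀ y) ^ Q₀ y =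
          Real.exp (Q₀ y * (-(Real.log (Q₀ y / Q₁ y)) / 2)) := by
        intro y
        rw [Real.rpow_def_of_pos (Real.sqrt_pos.2 (div_pos (h₁pos y) (h₀pos y)))]
        congr 1
        rw [Real.log_sqrt (div_pos (h₁pos y) (h₀pos y)).le,
          Real.log_div (h₁pos y).ne' (h₀pos y).ne',
          Real.log_div (h₀pos y).ne' (h₁pos y).ne']
        ring
      rw [Finset.prod_congr rfl (fun y _ => this y), ← Real.exp_sum]
      congr 1
      rw [← Finset.sum_neg_distrib, Finset.sum_div]
      exact Finset.sum_congr rfl (fun y _ => by ring)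
    have hr : (∑ y, Q₀ y * Real.sqrt (Q₁ y / Q₀ y)) =
        ∑ y, Real.sqrt (Q₀ y * Q₁ y) := by
      refine Finset.sum_congr rfl (fun y _ => ?_)
      rw [show Q₀ y * Real.sqrt (Q₁ y / Q₀ y) =
            Real.sqrt ((Q₀ y)^2) * Real.sqrt (Q₁ y / Q₀ y) by
          rw [Real.sqrt_sq (h₀pos y).le],
        ← Real.sqrt_mul (by positivity)]
      have h0 : Q₀ y ≠ 0 := (h₀pos y).ne'
      congr 1
      field_simp
    rw [hl, hr] at h
    exact h
  -- Step 2 (Cauchy–Schwarz): ∑ √(Q₀ Q₁) ≤ √(∑ m) * √(∑ M)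
  have hCS : (∑ y, Real.sqrt (Q₀ y * Q₁ y)) ≤
      Real.sqrt (∑ y, m y) * Real.sqrt (∑ y, M y) := by
    have h := Real.sum_sqrt_mul_sqrt_le Finset.univ
      (f := m) (g := M) (fun y => (hmpos y).le) (fun y => (hMpos y).le)
    have : ∀ y, Real.sqrt (Q₀ y * Q₁ y) = Real.sqrt (m y) * Real.sqrt (M y) := by
      intro y
      rw [← Real.sqrt_mul (hmpos y).le, min_mul_max]
    rw [Finset.sum_congr rfl (fun y _ => this y)]
    exact h
  -- sums of min and max
  have hsum2 : (∑ y, m y) + (∑ y, M y) = 2 := by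
    rw [← Finset.sum_add_distrib]
    have : ∀ y, m y + M y = Q₀ y + Q₁ y := fun y => min_add_max _ _
    rw [Finset.sum_congr rfl (fun y _ => this y), Finset.sum_add_distrib,
      h₀sum, h₁sum]
    norm_num
  have hmnonneg : (0:ℝ) ≤ ∑ y, m y := Finset.sum_nonneg fun y _ => (hmpos y).le
  have hMle2 : (∑ y, M y) ≤ 2 := by linarith
  have hMnonneg : (0:ℝ) ≤ ∑ y, M y :=
    Finset.sum_nonneg fun y _ => (hMpos y).le
  -- Step 3: (1/2) exp(-KL) ≤ ∑ m
  have hkey : (1/2) * Real.exp (-(∑ y, Q₀ y * Real.log (Q₀ y / Q₁ y))) ≤ ∑ y, m y := by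
    have hS0 : (0:ℝ) ≤ ∑ y, Real.sqrt (Q₀ y * Q₁ y) :=
      Finset.sum_nonneg fun y _ => Real.sqrt_nonneg _
    have h := mul_le_mul hJensen hJensen (Real.exp_nonneg _) hS0
    rw [← Real.exp_add] at h
    have he : (-(∑ y, Q₀ y * Real.log (Q₀ y / Q₁ y)) / 2) +
        (-(∑ y, Q₀ y * Real.log (Q₀ y / Q₁ y)) / 2) =
        -(∑ y, Q₀ y * Real.log (Q₀ y / Q₁ y)) := by ring
    rw [he] at h
    have hsq : (∑ y, Real.sqrt (Q₀ y * Q₁ y)) * (∑ y, Real.sqrt (Q₀ y * Q₁ y)) ≤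
        (∑ y, m y) * 2 := by
      have h2 := mul_le_mul hCS hCS (Finset.sum_nonneg fun y _ => Real.sqrt_nonneg _)
        (by positivity)
      have : Real.sqrt (∑ y, m y) * Real.sqrt (∑ y, M y) *
          (Real.sqrt (∑ y, m y) * Real.sqrt (∑ y, M y)) = (∑ y, m y) * (∑ y, M y) := by
        rw [show Real.sqrt (∑ y, m y) * Real.sqrt (∑ y, M y) *
            (Real.sqrt (∑ y, m y) * Real.sqrt (∑ y, M y)) =
            (Real.sqrt (∑ y, m y) * Real.sqrt (∑ y, m y)) *
            (Real.sqrt (∑ y, M y) * Real.sqrt (∑ y, M y)) by ring,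
          Real.mul_self_sqrt hmnonneg, Real.mul_self_sqrt hMnonneg]
      rw [this] at h2
      exact h2.trans (mul_le_mul_of_nonneg_left hMle2 hmnonneg)
    nlinarith [h.trans hsq]
  -- Step 4: ∑ m ≤ RHS
  have hpart : (∑ y, m y) ≤
      (∑ y ∈ Finset.univ.filter (fun y => J y = 1), Q₀ y) +
      (∑ y ∈ Finset.univ.filter (fun y => J y = 0), Q₁ y) := by
    have hsplit : (∑ y, m y) =
        (∑ y ∈ Finset.univ.filter (fun y => J y = 1), m y) +
        (∑ y ∈ Finset.univ.filter (fun y => J y = 0), m y) := by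
      rw [← Finset.sum_filter_add_sum_filter_not Finset.univ (fun y => J y = 1) m]
      congr 1
      apply Finset.sum_congr _ (fun _ _ => rfl)
      apply Finset.filter_congr
      intro y _
      omega
    rw [hsplit]
    gcongr with y hy y hy
    · exact min_le_left _ _
    · exact min_le_right _ _
  linarith
end
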